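/- arXiv:1804.03019 — 9 statements merged into one kernel-verified Lean document; each statement's English description precedes it below -/
import Mathlib

section
/- If C is a class of topological spaces closed under taking closed subspaces, then the class of C-generated spaces is also closed under taking closed subspaces. -/
universe u

/-- `C` is invariant under homeomorphism. -/
def HomeoInvariant (C : ∀ (α : Type u) [TopologicalSpace α], Prop) : Prop :=
  ∀ (α β : Type u) [TopologicalSpace α] [TopologicalSpace β], α ≃ₜ β → C α → C β

/-- `C` is closed under taking closed subspaces. -/
def ClosedHereditary (C : ∀ (α : Type u) [TopologicalSpace α], Prop) : Prop :=
  ∀ (α : Type u) [TopologicalSpace α], C α → ∀ F : Set α, IsClosed F → C F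

/-- `X` is `C`-generated: if `A ∩ Y` is closed in `Y` for every subspace `Y ∈ C`,
then `A` is closed in `X`. -/
def CGenerated (C : ∀ (α : Type u) [TopologicalSpace α], Prop)
    (X : Type u) [TopologicalSpace X] : Prop :=
  ∀ A : Set X, (∀ Y : Set X, C Y → IsClosed ((↑) ⁻¹' A : Set Y)) → IsClosed A

/-! If `A` is relatively closed in every `C`-subspace of a closed subspace `F`, then its image in
`X` is relatively closed in every `C`-subspace `Y` of `X`: the trace `Y ∩ F` is a closed subspace
of `Y`, hence in `C`, and seen from `F` it is a `C`-subspace of `F`. So `A` is closed in `X`, and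
hence in `F`. -/

open Set.Notation

section PreimageVal

variable {X : Type*} [TopologicalSpace X]

def Homeomorph.preimageValSwap (s t : Set X) : (s ↓∩ t) ≃ₜ (t ↓∩ s) where
  toFun x := ⟨⟨x.1.1, x.2⟩, x.1.2⟩
  invFun x := ⟨⟨x.1.1, x.2⟩, x.1.2⟩
  left_inv _ := rfl
  right_inv _ := rfl
  continuous_toFun := by fun_prop
  continuous_invFun := by fun_prop

theorem IsClosed.isClosed_preimage_val_image_val {F Y : Set X} (hF : IsClosed F) {A : Set F}
    (hA : IsClosed ((↑) ⁻¹' A : Set (F ↓∩ Y))) : IsClosed (Y ↓∩ (Subtype.val '' A)) := by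
  have hemb : Topology.IsClosedEmbedding
      ((Subtype.val : Y ↓∩ F → Y) ∘ (Homeomorph.preimageValSwap Y F).symm) :=
    hF.preimage_val.isClosedEmbedding_subtypeVal.comp
      (Homeomorph.preimageValSwap Y F).symm.isClosedEmbedding
  convert hemb.isClosedMap _ hA using 1
  ext y
  constructor
  · rintro ⟨a, haA, hay⟩
    exact ⟨⟨a, show a.1 ∈ Y from hay ▸ y.2⟩, haA, Subtype.ext hay⟩
  · rintro ⟨z, hzA, rfl⟩
    exact ⟨_, hzA, rfl⟩

end PreimageVal

theorem ClosedHereditary.preimage_val {C : ∀ (α : Type u) [TopologicalSpace α], Prop}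
    (hinv : HomeoInvariant C) (hC : ClosedHereditary C) {X : Type u} [TopologicalSpace X]
    {F Y : Set X} (hF : IsClosed F) (hY : C Y) : C (F ↓∩ Y) :=
  hinv _ _ (Homeomorph.preimageValSwap Y F) (hC Y hY _ hF.preimage_val)

theorem closedHereditary_cGenerated
    (C : ∀ (α : Type u) [TopologicalSpace α], Prop)
    (hinv : HomeoInvariant C) (hC : ClosedHereditary C)
    (X : Type u) [TopologicalSpace X] (hX : CGenerated C X)
    (F : Set X) (hF : IsClosed F) : CGenerated C F := by
  intro A hA
  rw [hF.isClosedEmbedding_subtypeVal.isClosed_iff_image_isClosed]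
  exact hX _ fun Y hY ↦ hF.isClosed_preimage_val_image_val (hA _ (hC.preimage_val hinv hF hY))
end

section
/- If C is a closed hereditary class of topological spaces, X is a regular C-generated space, and U is an open subspace of X, then U is C-generated. -/
universe u

/-- Transfer membership in `C` along an embedding onto a set. -/
lemma cTransfer {C : ∀ (α : Type u) [TopologicalSpace α], Prop}
    (hinv : HomeoInvariant C) {α β : Type u} [TopologicalSpace α] [TopologicalSpace β]
    {f : α → β} (hf : Topology.IsEmbedding f) {s : Set β} (hs : Set.range f = s)
    (h : C α) : C s :=
  hinv α s ((Topology.IsEmbedding.toHomeomorph hf).trans (Homeomorph.setCongr hs)) h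

theorem open_subspace_cGenerated
    (C : ∀ (α : Type u) [TopologicalSpace α], Prop)
    (hinv : HomeoInvariant C) (hC : ClosedHereditary C)
    (X : Type u) [TopologicalSpace X] [T3Space X] (hX : CGenerated C X)
    (U : Set X) (hU : IsOpen U) : CGenerated C U := by
  intro A hA
  rw [← isOpen_compl_iff]
  rw [isOpen_iff_forall_mem_open]
  intro x hx
  -- find a closed neighborhood V of ↑x inside U
  obtain ⟨V, ⟨hVn, hVc⟩, hVU⟩ := (closed_nhds_basis (x : X)).mem_iff.1 (hU.mem_nhds x.2)
  -- S = image of A intersected with V is closed in X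
  set S : Set X := (Subtype.val '' A) ∩ V with hS
  have hSclosed : IsClosed S := by
    apply hX
    intro Y hY
    -- F = preimage of V in Y, a closed subspace of Y
    set F : Set Y := Subtype.val ⁻¹' V with hF
    have hFc : IsClosed F := hVc.preimage continuous_subtype_val
    have hCF : C F := hC Y hY F hFc
    -- W : Set U, corresponding to Y ∩ V
    set W : Set U := (fun u : U => (u : X)) ⁻¹' (Y ∩ V) with hW
    -- the subtype of W is homeomorphic to F, both embed in X with range Y ∩ V
    have hembF : Topology.IsEmbedding (fun z : F => ((z : Y) : X)) :=
      Topology.IsEmbedding.subtypeVal.comp Topology.IsEmbedding.subtypeVal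
    have hrangeF : Set.range (fun z : F => ((z : Y) : X)) = Y ∩ V := by
      ext p
      constructor
      · rintro ⟨z, rfl⟩
        exact ⟨(z : Y).2, z.2⟩
      · rintro ⟨hpY, hpV⟩
        exact ⟨⟨⟨p, hpY⟩, hpV⟩, rfl⟩
    have hCYV : C (Y ∩ V : Set X) := cTransfer hinv hembF hrangeF hCF
    -- now embed Y ∩ V into U as W
    have hsub : ∀ p : (Y ∩ V : Set X), (p : X) ∈ U := fun p => hVU p.2.2
    have hembW : Topology.IsEmbedding
        (fun p : (Y ∩ V : Set X) => (⟨(p : X), hsub p⟩ : U)) := by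
      apply Topology.IsEmbedding.of_comp (g := (Subtype.val : U → X))
      · exact continuous_subtype_val.subtype_mk _
      · exact continuous_subtype_val
      · exact Topology.IsEmbedding.subtypeVal
    have hrangeW : Set.range (fun p : (Y ∩ V : Set X) => (⟨(p : X), hsub p⟩ : U)) = W := by
      ext u
      constructor
      · rintro ⟨p, rfl⟩
        exact p.2
      · intro hu
        exact ⟨⟨(u : X), hu⟩, rfl⟩
    have hCW : C W := cTransfer hinv hembW hrangeW hCYV
    -- A's preimage in W is closed
    have hAW : IsClosed ((Subtype.val : W → U) ⁻¹' A) := hA W hCW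
    -- transfer: the preimage of S in Y equals the image under F-inclusion of a closed set
    have hFsub : (Subtype.val ⁻¹' S : Set Y) ⊆ F := fun y hy => hy.2
    have key : IsClosed ((Subtype.val : F → Y) ⁻¹' (Subtype.val ⁻¹' S)) := by
      -- use the homeomorphism F ≃ₜ Y ∩ V ≃ₜ W
      set e : F ≃ₜ W :=
        ((Topology.IsEmbedding.toHomeomorph hembF).trans (Homeomorph.setCongr hrangeF)).trans
          ((Topology.IsEmbedding.toHomeomorph hembW).trans (Homeomorph.setCongr hrangeW)) with he
      have : ((Subtype.val : F → Y) ⁻¹' (Subtype.val ⁻¹' S)) =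
          e ⁻¹' ((Subtype.val : W → U) ⁻¹' A) := by
        ext z
        simp only [Set.mem_preimage, he, hS]
        constructor
        · rintro ⟨⟨a, haA, hav⟩, -⟩
          have : (((e z : W) : U) : X) = ((z : Y) : X) := rfl
          have hxa : ((e z : W) : U) = a := by
            apply Subtype.ext
            rw [this, ← hav]
          rw [hxa]; exact haA
        · intro h
          have : (((e z : W) : U) : X) = ((z : Y) : X) := rfl
          refine ⟨⟨((e z : W) : U), h, this⟩, z.2⟩
      rw [this]
      exact hAW.preimage e.continuous
    -- since F is closed in Y and the set is inside F, it is closed in Y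
    have := hFc.isClosedEmbedding_subtypeVal.isClosedMap _ key
    rwa [Set.image_preimage_eq_of_subset (by simpa using hFsub)] at this
  -- now take the open set interior V \ S
  refine ⟨(fun u : U => (u : X)) ⁻¹' (interior V \ S), ?_, ?_, ?_⟩
  · intro u hu huA
    exact hu.2 ⟨⟨u, huA, rfl⟩, interior_subset hu.1⟩
  · exact (isOpen_interior.sdiff hSclosed).preimage continuous_subtype_val
  · refine ⟨mem_interior_iff_mem_nhds.2 hVn, fun hxS => hx ?_⟩
    obtain ⟨⟨a, haA, hav⟩, -⟩ := hxS
    exact Subtype.ext hav ▸ haA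
end

section
/- Every almost disjoint family of ω₁ many uncountable sets is essentially disjoint: if 𝒳 is a family of ω₁ many sets, each of cardinality ω₁, such that any two distinct members have countable intersection, then each X ∈ 𝒳 has a subset Y_X with X \ Y_X countable such that the family {Y_X : X ∈ 𝒳} is pairwise disjoint. -/
/-!
Order the index set as a subset of `ω₁`, so that every index has only countably many predecessors,
and remove from each `X i` all earlier members: `Y i = X i \ ⋃ j < i, X j`. Then `X i \ Y i` is
the countable union of the countable sets `X i ∩ X j` over `j < i`.
-/

open Cardinal Set Function

universe u

section
variable {α ι : Type*} [LinearOrder ι] (X : ι → Set α)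

theorem pairwise_disjoint_diff_biUnion_Iio :
    Pairwise (Disjoint on fun i => X i \ ⋃ j < i, X j) := by
  have disjoint_of_lt : ∀ ⦃i j⦄, i < j → Disjoint (X i \ ⋃ k < i, X k) (X j \ ⋃ k < j, X k) :=
    fun i j hij => disjoint_sdiff_right.mono sdiff_subset
      (sdiff_subset_sdiff_right (subset_biUnion_of_mem (u := X) hij))
  intro i j hij
  rcases hij.lt_or_gt with h | h
  · exact disjoint_of_lt h
  · exact (disjoint_of_lt h).symm

theorem countable_diff_diff_biUnion_Iio {i : ι} (hi : (Iio i).Countable)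
    (hX : ∀ j < i, (X i ∩ X j).Countable) : (X i \ (X i \ ⋃ j < i, X j)).Countable := by
  rw [sdiff_sdiff_right_self, inter_iUnion₂]
  exact hi.biUnion hX

theorem exists_subset_countable_diff_pairwise_disjoint (hIio : ∀ i : ι, (Iio i).Countable)
    (hX : Pairwise fun i j => (X i ∩ X j).Countable) :
    ∃ Y : ι → Set α, (∀ i, Y i ⊆ X i) ∧ (∀ i, (X i \ Y i).Countable) ∧
      Pairwise (Disjoint on Y) :=
  ⟨fun i => X i \ ⋃ j < i, X j, fun _ => sdiff_subset,
    fun i => countable_diff_diff_biUnion_Iio X (hIio i) fun _ hj => hX hj.ne',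
    pairwise_disjoint_diff_biUnion_Iio X⟩

end

theorem exists_linearOrder_countable_Iio {ι : Type u} (h : #ι ≤ ℵ₁) :
    ∃ _ : LinearOrder ι, ∀ i : ι, (Iio i).Countable := by
  obtain ⟨e⟩ : Nonempty (ι ↪ (ℵ₁ : Cardinal.{u}).ord.ToType) := by
    rw [← le_def]
    simpa using h
  let o : LinearOrder ι := LinearOrder.lift' e e.injective
  refine ⟨o, fun i => ?_⟩
  have hIio : (Iio (e i)).Countable := by
    rw [← le_aleph0_iff_set_countable, ← lt_aleph_one_iff]
    simpa using mk_Iio_lt (e i) (by simp)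
  exact hIio.preimage e.injective

theorem almostDisjoint_essentiallyDisjoint_general {α : Type u} {ι : Type u}
    (hι : #ι = aleph 1) (X : ι → Set α)
    (had : ∀ i j, i ≠ j → #↥(X i ∩ X j) ≤ aleph0) :
    ∃ Y : ι → Set α, (∀ i, Y i ⊆ X i) ∧ (∀ i, #↥(X i \ Y i) ≤ aleph0) ∧
      ∀ i j, i ≠ j → Disjoint (Y i) (Y j) := by
  obtain ⟨_, hIio⟩ := exists_linearOrder_countable_Iio hι.le
  simp only [le_aleph0_iff_set_countable] at had ⊢
  exact exists_subset_countable_diff_pairwise_disjoint X hIio had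

theorem almostDisjoint_essentiallyDisjoint {α : Type u} {ι : Type u}
    (hι : #ι = aleph 1) (X : ι → Set α)
    (hcard : ∀ i, #↥(X i) = aleph 1)
    (had : ∀ i j, i ≠ j → #↥(X i ∩ X j) ≤ aleph0) :
    ∃ Y : ι → Set α, (∀ i, Y i ⊆ X i) ∧ (∀ i, #↥(X i \ Y i) ≤ aleph0) ∧
      ∀ i j, i ≠ j → Disjoint (Y i) (Y j) :=
  almostDisjoint_essentiallyDisjoint_general hι X had
end

section
/- Let X be a topological space, κ a cardinal, and suppose the family of κ-resolvable subspaces of X forms a π-network in X (i.e., every nonempty open set of X contains a κ-resolvable subspace). Then X is κ-resolvable. -/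
/-!
Take, by Zorn's lemma, a maximal pairwise disjoint family `A` of `κ`-resolvable subspaces. Its
union is dense: a nonempty open set missing it would contain a further `κ`-resolvable subspace,
contradicting maximality. Gluing, for each `i < κ`, the `i`-th dense piece of every member of `A`
gives `κ` pairwise disjoint sets, each of whose closures contains `⋃₀ A`, hence dense in `X`.
-/

open Cardinal Set

universe u

def Resolvable (κ : Cardinal.{u}) (X : Type u) [TopologicalSpace X] : Prop :=
  ∃ (ι : Type u) (D : ι → Set X), #ι = κ ∧ (∀ i, Dense (D i)) ∧
    Pairwise (Function.onFun Disjoint D)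

section

variable {X : Type u} [TopologicalSpace X]

theorem exists_pairwiseDisjoint_dense_sUnion (P : Set X → Prop)
    (h : ∀ U : Set X, IsOpen U → U.Nonempty → ∃ Y : Set X, Y.Nonempty ∧ Y ⊆ U ∧ P Y) :
    ∃ A : Set (Set X), A.PairwiseDisjoint id ∧ (∀ Y ∈ A, P Y) ∧ Dense (⋃₀ A) := by
  obtain ⟨A, hAmax⟩ :
      ∃ A, Maximal (· ∈ {A : Set (Set X) | (∀ Y ∈ A, P Y) ∧ A.PairwiseDisjoint id}) A := by
    refine zorn_subset _ fun c hc hchain => ⟨⋃₀ c, ⟨?_, ?_⟩, fun _ => subset_sUnion_of_mem⟩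
    · rintro Y ⟨B, hB, hYB⟩
      exact (hc hB).1 Y hYB
    · exact (pairwiseDisjoint_sUnion hchain.directedOn).2 fun B hB => (hc hB).2
  obtain ⟨hAP, hAdisj⟩ := hAmax.prop
  refine ⟨A, hAdisj, hAP, dense_iff_inter_open.2 fun U hU hUne => ?_⟩
  by_contra hUA
  obtain ⟨Y, hYne, hYU, hY⟩ := h U hU hUne
  have hYdisj : ∀ Z ∈ A, Disjoint Y Z := fun Z hZ =>
    disjoint_left.2 fun x hxY hxZ => hUA ⟨x, hYU hxY, Z, hZ, hxZ⟩
  have hYA : Y ∈ A := hAmax.mem_of_prop_insert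
    ⟨forall_mem_insert.2 ⟨hY, hAP⟩, hAdisj.insert fun Z hZ _ => hYdisj Z hZ⟩
  exact hYne.ne_empty (disjoint_self.1 (hYdisj Y hYA))

theorem Resolvable.exists_subset_subset_closure {κ : Cardinal.{u}} {Y : Set X}
    (hY : Resolvable κ Y) {ι : Type u} (hι : #ι = κ) :
    ∃ D : ι → Set X, (∀ i, D i ⊆ Y) ∧ (∀ i, Y ⊆ closure (D i)) ∧
      Pairwise (Function.onFun Disjoint D) := by
  obtain ⟨ι', D, hι', hD, hDdisj⟩ := hY
  obtain ⟨e⟩ := Cardinal.eq.1 (hι.trans hι'.symm)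
  refine ⟨fun i => (↑) '' D (e i), fun i => Subtype.coe_image_subset Y _,
    fun i => Subtype.dense_iff.1 (hD (e i)), fun i j hij => ?_⟩
  exact (disjoint_image_iff Subtype.val_injective).2 (hDdisj (e.injective.ne hij))

theorem resolvable_of_dense_sUnion {κ : Cardinal.{u}} {A : Set (Set X)}
    (hA : A.PairwiseDisjoint id) (hres : ∀ Y ∈ A, Resolvable κ Y) (hdense : Dense (⋃₀ A)) :
    Resolvable κ X := by
  choose D hDY hYD hDdisj using
    fun Y : A => (hres Y Y.2).exists_subset_subset_closure (mk_out κ)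
  refine ⟨κ.out, fun i => ⋃ Y : A, D Y i, mk_out κ, fun i => ?_, fun i j hij => ?_⟩
  · refine dense_closure.1 (hdense.mono (sUnion_subset fun Y hY => ?_))
    exact (hYD ⟨Y, hY⟩ i).trans (closure_mono (subset_iUnion (fun Y : A => D Y i) ⟨Y, hY⟩))
  · refine disjoint_iUnion_left.2 fun Y => disjoint_iUnion_right.2 fun Z => ?_
    by_cases hYZ : Y = Z
    · subst hYZ
      exact hDdisj Y hij
    · exact (hA Y.2 Z.2 (Subtype.coe_ne_coe.2 hYZ)).mono (hDY Y i) (hDY Z j)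

end

/-- El'kin's theorem. -/
theorem elkin (X : Type u) [TopologicalSpace X] (κ : Cardinal.{u})
    (h : ∀ U : Set X, IsOpen U → U.Nonempty →
      ∃ Y : Set X, Y.Nonempty ∧ Y ⊆ U ∧ Resolvable κ Y) :
    Resolvable κ X := by
  obtain ⟨A, hA, hres, hdense⟩ := exists_pairwiseDisjoint_dense_sUnion _ h
  exact resolvable_of_dense_sUnion hA hres hdense
end

section
/- If X is a topological space with countable spread and density greater than ω, then X contains a nonempty open subspace U with countable spread and dispersion character Δ(U) > ω. -/
/-!
Take a maximal disjoint family `𝒢` of nonempty countable open sets. Choosing one point in each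
member gives a discrete set, so `𝒢` is countable, hence so is `⋃₀ 𝒢`, which therefore is not
dense. By maximality every nonempty countable open set meets `⋃₀ 𝒢`, so no nonempty open subset
of `U = X \ closure (⋃₀ 𝒢)` is countable.
-/

open Set Function

theorem exists_maximal_pairwiseDisjoint_subset {α : Type*} (𝒞 : Set (Set α)) :
    ∃ 𝒢, Maximal (fun 𝒢 : Set (Set α) => 𝒢 ⊆ 𝒞 ∧ 𝒢.PairwiseDisjoint id) 𝒢 :=
  zorn_subset _ fun c hc𝒞 hchain =>
    ⟨⋃₀ c, ⟨sUnion_subset fun _ hs => (hc𝒞 hs).1,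
      (hchain.pairwiseDisjoint_sUnion id).2 fun _ hs => (hc𝒞 hs).2⟩,
      fun _ => subset_sUnion_of_mem⟩

theorem Maximal.inter_sUnion_nonempty {α : Type*} {𝒞 𝒢 : Set (Set α)}
    (h𝒢 : Maximal (fun 𝒢 : Set (Set α) => 𝒢 ⊆ 𝒞 ∧ 𝒢.PairwiseDisjoint id) 𝒢) {C : Set α}
    (hC : C ∈ 𝒞) (hne : C.Nonempty) : (C ∩ ⋃₀ 𝒢).Nonempty := by
  by_contra hdisj
  rw [not_nonempty_iff_eq_empty, ← disjoint_iff_inter_eq_empty] at hdisj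
  have hinsert : insert C 𝒢 ⊆ 𝒞 ∧ (insert C 𝒢).PairwiseDisjoint id :=
    ⟨insert_subset hC h𝒢.1.1,
      h𝒢.1.2.insert fun O hO _ => hdisj.mono_right (subset_sUnion_of_mem hO)⟩
  have hC𝒢 : C ∈ 𝒢 := h𝒢.2 hinsert (subset_insert _ _) (mem_insert _ _)
  exact hne.ne_empty (disjoint_self.1 (hdisj.mono_right (subset_sUnion_of_mem hC𝒢)))

theorem Set.PairwiseDisjoint.countable_of_forall_discrete_countable {X : Type*}
    [TopologicalSpace X] (hs : ∀ D : Set X, DiscreteTopology D → D.Countable)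
    {𝒢 : Set (Set X)} (hdisj : 𝒢.PairwiseDisjoint id) (hopen : ∀ O ∈ 𝒢, IsOpen O)
    (hne : ∀ O ∈ 𝒢, O.Nonempty) : 𝒢.Countable := by
  choose f hf using fun O : 𝒢 => hne O O.2
  have eq_of_mem : ∀ {O O' : 𝒢}, f O' ∈ (O : Set X) → O' = O := fun {O O'} hO' =>
    Subtype.ext (hdisj.elim_set O'.2 O.2 _ (hf O') hO')
  have hinter : ∀ O : 𝒢, (O : Set X) ∩ Set.range f = {f O} := fun O => by
    ext y
    constructor
    · rintro ⟨hyO, O', rfl⟩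
      rw [eq_of_mem hyO]
      rfl
    · rintro rfl
      exact ⟨hf O, O, rfl⟩
  have hdiscrete : DiscreteTopology (Set.range f) :=
    discreteTopology_subtype_iff'.2 <| by
      rintro _ ⟨O, rfl⟩
      exact ⟨O, hopen O O.2, hinter O⟩
  have hinj : Injective f := fun O O' h => (eq_of_mem (h ▸ hf O)).symm
  have hrange := (hs _ hdiscrete).to_subtype
  exact countable_coe_iff.1 ((Equiv.ofInjective f hinj).countable_iff.2 hrange)

theorem spread_lt_density {X : Type*} [TopologicalSpace X]
    (hs : ∀ D : Set X, DiscreteTopology D → D.Countable)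
    (hd : ∀ D : Set X, Dense D → ¬ D.Countable) :
    ∃ U : Set X, IsOpen U ∧ U.Nonempty ∧
      (∀ D : Set X, D ⊆ U → DiscreteTopology D → D.Countable) ∧
      (∀ V : Set X, IsOpen V → (V ∩ U).Nonempty → ¬ (V ∩ U).Countable) := by
  obtain ⟨𝒢, h𝒢⟩ :=
    exists_maximal_pairwiseDisjoint_subset {O : Set X | IsOpen O ∧ O.Countable ∧ O.Nonempty}
  have h𝒢_countable : 𝒢.Countable :=
    h𝒢.1.2.countable_of_forall_discrete_countable hs (fun O hO => (h𝒢.1.1 hO).1)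
      fun O hO => (h𝒢.1.1 hO).2.2
  have hunion_countable : (⋃₀ 𝒢).Countable :=
    h𝒢_countable.sUnion fun O hO => (h𝒢.1.1 hO).2.1
  have hnot_dense : closure (⋃₀ 𝒢) ≠ univ := fun h =>
    hd _ (dense_iff_closure_eq.2 h) hunion_countable
  refine ⟨(closure (⋃₀ 𝒢))ᶜ, isClosed_closure.isOpen_compl, nonempty_compl.2 hnot_dense,
    fun D _ hD => hs D hD, fun V hV hne hcount => ?_⟩
  obtain ⟨x, hxVU, hx𝒢⟩ :=
    h𝒢.inter_sUnion_nonempty ⟨hV.inter isClosed_closure.isOpen_compl, hcount, hne⟩ hne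
  exact hxVU.2 (subset_closure hx𝒢)
end

section
/- Let X be a regular space in which no nonempty open subspace is ω-resolvable. Then X has a nonempty open subspace Z admitting a good partition; consequently the open subsets of X admitting a good partition form a π-base of X. -/
universe u

/-- An indexed partition `P` of `Z` into `n` pieces is good. -/
def GoodPartition {Z : Type u} [TopologicalSpace Z] (n : ℕ) (P : Fin n → Set Z) : Prop :=
  (∀ x : Z, ∃! i, x ∈ P i) ∧
  ∀ i : Fin n, ∀ D : Set Z, D ⊆ P i → D.Countable → D.Infinite → DiscreteTopology D →
    ∀ j, j ≤ i → ∀ x ∈ P j, ¬ AccPt x (Filter.principal D)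

/-- A space is ω-resolvable if it has countably infinitely many pairwise disjoint
dense subsets. -/
def OmegaResolvable (X : Type u) [TopologicalSpace X] : Prop :=
  ∃ D : ℕ → Set X, (∀ n, Dense (D n)) ∧ Pairwise (Function.onFun Disjoint D)

set_option linter.unusedSectionVars false

section Aux

open Filter Set Topology



section Helpers
variable {α : Type u}

/-- Dependent choice over ℕ where the predicate at `n` depends only on values at indices `≤ n`. -/
lemma depRec [Nonempty α] (P : ℕ → (ℕ → α) → Prop)
    (hdep : ∀ n (v v' : ℕ → α), (∀ k ≤ n, v k = v' k) → P n v → P n v')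
    (hstep : ∀ n (v : ℕ → α), (∀ k < n, P k v) → ∃ a, P n (Function.update v n a)) :
    ∃ v : ℕ → α, ∀ n, P n v := by
  classical
  let A : ℕ → (ℕ → α) → α := fun m vm =>
    if h : ∀ k < m, P k vm then (hstep m vm h).choose else Classical.arbitrary α
  let g : ℕ → (ℕ → α) := fun n => Nat.rec (fun _ => Classical.arbitrary α)
    (fun m vm => Function.update vm m (A m vm)) n
  have hgsucc : ∀ m, g (m + 1) = Function.update (g m) m (A m (g m)) := fun m => rfl
  have hcoh : ∀ m k, k < m → g m k = g (k + 1) k := by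
    intro m
    induction m with
    | zero => omega
    | succ p ih =>
      intro k hk
      rcases Nat.lt_succ_iff_lt_or_eq.1 hk with hk | rfl
      · rw [hgsucc p, Function.update_of_ne (by omega)]
        exact ih k hk
      · rfl
  have hinv : ∀ n, ∀ k < n, P k (g n) := by
    intro n
    induction n with
    | zero => omega
    | succ m ih =>
      have hA : A m (g m) = (hstep m (g m) ih).choose := dif_pos ih
      have hP : P m (g (m + 1)) := by
        rw [hgsucc, hA]; exact (hstep m (g m) ih).choose_spec
      intro k hk
      rcases Nat.lt_succ_iff_lt_or_eq.1 hk with hk | rfl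
      · refine hdep k _ _ (fun j hj => ?_) (ih k hk)
        rw [hgsucc, Function.update_of_ne (by omega)]
      · exact hP
  refine ⟨fun n => g (n + 1) n, fun n => ?_⟩
  refine hdep n (g (n + 1)) _ (fun k hk => ?_) (hinv (n + 1) n (by omega))
  exact hcoh (n + 1) k (by omega)
end Helpers

variable {X : Type u} [TopologicalSpace X]
variable {X : Type u} [TopologicalSpace X]

/-- ambient formulation of discreteness of a subset -/
def DSet (D : Set X) : Prop := ∀ x ∈ D, 𝓝[≠] x ⊓ 𝓟 D = ⊥

lemma dset_iff {D : Set X} : DiscreteTopology D ↔ DSet D := discreteTopology_subtype_iff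

lemma DSet.mono {D D' : Set X} (h : DSet D) (hsub : D' ⊆ D) : DSet D' :=
  fun x hx => le_bot_iff.1 <| (h x (hsub hx)) ▸ inf_le_inf_left _ (principal_mono.2 hsub)

lemma accPt_inter_of_mem_nhds {x : X} {D U : Set X} (hU : U ∈ 𝓝 x) (h : AccPt x (𝓟 D)) :
    AccPt x (𝓟 (D ∩ U)) := by
  have : 𝓝[≠] x ⊓ 𝓟 (D ∩ U) = 𝓝[≠] x ⊓ 𝓟 D := by
    rw [← inf_principal, inf_comm (𝓟 D) _, ← inf_assoc,
      inf_eq_left.2 (le_principal_iff.2 (mem_nhdsWithin_of_mem_nhds hU))]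
  unfold AccPt
  rw [this]; exact h

lemma AccPt.mem_closure {x : X} {D : Set X} (h : AccPt x (𝓟 D)) : x ∈ closure D := by
  rw [mem_closure_iff_clusterPt]
  exact ((accPt_principal_iff_clusterPt (x := x) (C := D)).1 h).mono (principal_mono.2 diff_subset)

lemma accPt_union {x : X} (A B : Set X) :
    AccPt x (𝓟 (A ∪ B)) ↔ AccPt x (𝓟 A) ∨ AccPt x (𝓟 B) := by
  rw [← sup_principal, accPt_sup]

lemma accPt_diff_singleton {x : X} (D : Set X) :
    AccPt x (𝓟 (D \ {x})) ↔ AccPt x (𝓟 D) := by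
  rw [accPt_principal_iff_clusterPt, accPt_principal_iff_clusterPt, diff_diff,
    union_eq_self_of_subset_right (subset_refl _ : ({x}:Set X) ⊆ {x})]

/-- In a regular space we can shrink neighbourhoods to closures. -/
lemma reg_shrink [RegularSpace X] {x : X} {G : Set X} (hG : IsOpen G) (hx : x ∈ G) :
    ∃ V : Set X, IsOpen V ∧ x ∈ V ∧ closure V ⊆ G := by
  obtain ⟨t, ht, htc, hts⟩ := exists_mem_nhds_isClosed_subset (hG.mem_nhds hx)
  exact ⟨interior t, isOpen_interior, mem_interior_iff_mem_nhds.2 ht,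
    (closure_minimal interior_subset htc).trans hts⟩

/-- a countable discrete subset of a T3 space is strongly discrete -/
lemma strongly_discrete [T3Space X] {D : Set X} (hc : D.Countable) (hd : DSet D) :
    ∃ U : X → Set X, (∀ d ∈ D, IsOpen (U d) ∧ d ∈ U d ∧ U d ∩ D ⊆ {d}) ∧
      D.PairwiseDisjoint U := by
  classical
  rcases D.eq_empty_or_nonempty with rfl | hne
  · exact ⟨fun _ => ∅, by simp, by simp [Set.PairwiseDisjoint, Set.Pairwise]⟩
  obtain ⟨f, rfl⟩ := hc.exists_eq_range hne
  -- open sets isolating each point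
  have hO : ∀ d ∈ range f, ∃ O : Set X, IsOpen O ∧ d ∈ O ∧ O ∩ range f ⊆ {d} := by
    intro d hd'
    have h1 : (range f)ᶜ ∈ 𝓝[≠] d := by
      have := hd d hd'
      rwa [inf_principal_eq_bot] at this
    rw [mem_nhdsWithin] at h1
    obtain ⟨O, hOo, hdO, hsub⟩ := h1
    refine ⟨O, hOo, hdO, fun y hy => ?_⟩
    by_contra hy'
    exact (hsub ⟨hy.1, hy'⟩) hy.2
  choose O hOo hdO hOD using hO
  set Of : ℕ → Set X := fun n => O (f n) (mem_range_self n) with hOf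
  -- recursive shrinking
  have main : ∃ v : ℕ → Set X, ∀ n, IsOpen (v n) ∧ f n ∈ v n ∧ closure (v n) ⊆ Of n ∧
      ∀ k < n, f n ≠ f k → Disjoint (closure (v n)) (closure (v k)) := by
    refine depRec _ ?_ ?_
    · rintro n v v' hvv ⟨h1, h2, h3, h4⟩
      rw [← hvv n le_rfl]
      exact ⟨h1, h2, h3, fun k hk hfk => (hvv k (le_of_lt hk)) ▸ h4 k hk hfk⟩
    · intro n v hv
      have hGopen : IsOpen (Of n ∩ ⋂ k ∈ Finset.range n,
          (if f n = f k then univ else (closure (v k))ᶜ)) := by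
        refine IsOpen.inter (hOo _ _) (isOpen_biInter_finset fun k hk => ?_)
        split
        · exact isOpen_univ
        · exact (isClosed_closure).isOpen_compl
      have hmem : f n ∈ Of n ∩ ⋂ k ∈ Finset.range n,
          (if f n = f k then univ else (closure (v k))ᶜ) := by
        refine ⟨hdO _ _, mem_biInter fun k hk => ?_⟩
        split_ifs with hfk
        · trivial
        · -- f n ∉ closure (v k) since closure (v k) ⊆ Of k and Of k ∩ range f ⊆ {f k}
          intro hmem
          have h3 := (hv k (Finset.mem_range.1 hk)).2.2.1 hmem
          exact hfk (((hOD _ _) ⟨h3, mem_range_self n⟩ : f n ∈ ({f k} : Set X)))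
      obtain ⟨V, hVo, hfV, hVcl⟩ := reg_shrink hGopen hmem
      refine ⟨V, ?_⟩
      rw [Function.update_self]
      refine ⟨hVo, hfV, hVcl.trans inter_subset_left, fun k hk hfk => ?_⟩
      rw [Function.update_of_ne (by omega)]
      rw [Set.disjoint_iff_inter_eq_empty]
      apply eq_empty_of_subset_empty
      intro y hy
      have := hVcl hy.1
      have h5 := (mem_iInter₂.1 this.2) k (Finset.mem_range.2 hk)
      rw [if_neg hfk] at h5
      exact h5 hy.2
  obtain ⟨v, hv⟩ := main
  refine ⟨fun d => if h : ∃ n, f n = d then v (Nat.find h) else ∅, ?_, ?_⟩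
  · rintro d hd'
    have h : ∃ n, f n = d := hd'
    simp only []
    rw [dif_pos h]
    obtain ⟨h1, h2, h3, _⟩ := hv (Nat.find h)
    rw [Nat.find_spec h] at h2
    refine ⟨h1, h2, fun y hy => ?_⟩
    have := h3 (subset_closure hy.1)
    have h4 := hOD _ (mem_range_self (Nat.find h)) ⟨this, hy.2⟩
    rwa [Nat.find_spec h] at h4
  · rintro d hd' e he' hde
    have h : ∃ n, f n = d := hd'
    have h' : ∃ n, f n = e := he'
    simp only [Function.onFun]
    rw [dif_pos h, dif_pos h']
    have hne2 : f (Nat.find h) ≠ f (Nat.find h') := by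
      rw [Nat.find_spec h, Nat.find_spec h']; exact hde
    have hfind : Nat.find h ≠ Nat.find h' := fun hc => hne2 (by rw [hc])
    rcases Nat.lt_or_ge (Nat.find h) (Nat.find h') with hlt | hge
    · exact Disjoint.mono subset_closure subset_closure
        ((hv (Nat.find h')).2.2.2 _ hlt hne2.symm).symm
    · exact Disjoint.mono subset_closure subset_closure
        ((hv (Nat.find h)).2.2.2 _ (by omega) hne2)

variable [T3Space X]

def Fa (A : Set X) : Set X :=
  {x | ∃ D : Set X, D ⊆ A ∧ D.Countable ∧ DSet D ∧ AccPt x (𝓟 D)}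

lemma Fa.mono {A B : Set X} (h : A ⊆ B) : Fa A ⊆ Fa B := by
  rintro x ⟨D, hDA, hc, hd, ha⟩
  exact ⟨D, hDA.trans h, hc, hd, ha⟩

def Sder (Z : Set X) : ℕ → Set X
  | 0 => Z
  | n+1 => Sder Z n ∩ Fa (Sder Z n)

lemma Sder_succ_subset (Z : Set X) (n : ℕ) : Sder Z (n+1) ⊆ Sder Z n := inter_subset_left

lemma Sder_antitone (Z : Set X) : ∀ {m n : ℕ}, m ≤ n → Sder Z n ⊆ Sder Z m := by
  intro m n h
  induction n with
  | zero => have : m = 0 := by omega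
            subst this; exact subset_rfl
  | succ p ih =>
    rcases Nat.eq_or_lt_of_le h with rfl | hlt
    · exact subset_rfl
    · exact (Sder_succ_subset Z p).trans (ih (by omega))

lemma Sder_subset (Z : Set X) (n : ℕ) : Sder Z n ⊆ Z := Sder_antitone Z (Nat.zero_le n)

lemma Sder_mono {Z Z' : Set X} (h : Z' ⊆ Z) (n : ℕ) : Sder Z' n ⊆ Sder Z n := by
  induction n with
  | zero => exact h
  | succ m ih => exact inter_subset_inter ih (Fa.mono ih)

lemma image_dset {Z : Set X} (hZ : IsOpen Z) {D : Set ↥Z}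
    (hD : DiscreteTopology ↥D) : DSet (Subtype.val '' D) := by
  have hd := discreteTopology_subtype_iff.1 hD
  rintro x ⟨z, hzD, rfl⟩
  have hb : map (Subtype.val : ↥Z → X) (𝓝[≠] z ⊓ 𝓟 D) = ⊥ := by
    rw [hd z hzD, Filter.map_bot]
  rw [Filter.map_inf Subtype.val_injective, Filter.map_principal,
    hZ.isOpenEmbedding_subtypeVal.isEmbedding.map_nhdsWithin_eq] at hb
  have himg : (Subtype.val : ↥Z → X) '' {z}ᶜ = Z \ {(z : X)} := by
    ext y
    simp only [Set.mem_image, Set.mem_compl_iff, Set.mem_singleton_iff, Set.mem_diff]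
    constructor
    · rintro ⟨w, hw, rfl⟩
      exact ⟨w.2, fun hc => hw (Subtype.val_injective hc)⟩
    · rintro ⟨hy, hy'⟩
      exact ⟨⟨y, hy⟩, fun hc => hy' (congrArg Subtype.val hc), rfl⟩
  rw [himg] at hb
  have key : 𝓝[≠] (z : X) ⊓ 𝓟 (Subtype.val '' D) =
      𝓝[Z \ {(z : X)}] (z : X) ⊓ 𝓟 (Subtype.val '' D) := by
    rw [nhdsWithin, nhdsWithin, inf_assoc, inf_assoc, inf_principal, inf_principal]
    congr 2
    ext y
    simp only [Set.mem_inter_iff, Set.mem_compl_iff, Set.mem_singleton_iff, Set.mem_diff,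
      Set.mem_image]
    constructor
    · rintro ⟨hy, w, hw, rfl⟩
      exact ⟨⟨w.2, hy⟩, w, hw, rfl⟩
    · rintro ⟨⟨_, hy⟩, w, hw, rfl⟩
      exact ⟨hy, w, hw, rfl⟩
  rw [key, hb]

lemma image_accPt {Z : Set X} {D : Set ↥Z} {z : ↥Z} (h : AccPt z (𝓟 D)) :
    AccPt (z : X) (𝓟 (Subtype.val '' D)) := by
  have hmap : (map (Subtype.val : ↥Z → X) (𝓝[≠] z ⊓ 𝓟 D)).NeBot := Filter.NeBot.map h _
  refine Filter.NeBot.mono hmap ?_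
  rw [Filter.map_inf Subtype.val_injective, Filter.map_principal,
    (IsEmbedding.subtypeVal).map_nhdsWithin_eq]
  refine inf_le_inf ?_ le_rfl
  refine nhdsWithin_mono _ ?_
  rintro y ⟨w, hw, rfl⟩
  exact fun hc => hw (Subtype.val_injective hc)

lemma case1 {Z : Set X} (hZo : IsOpen Z) {n : ℕ} (hS : Sder Z (n+1) = ∅) :
    ∃ P : Fin (n+1) → Set ↥Z, GoodPartition (n+1) P := by
  classical
  refine ⟨fun i => {z : ↥Z | (z : X) ∈ Sder Z i \ Sder Z (i+1)}, ?_, ?_⟩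
  · intro z
    have hex : ∃ k, (z : X) ∉ Sder Z (k+1) := ⟨n, by rw [hS]; exact notMem_empty _⟩
    set k := Nat.find hex with hk
    have hkn : k ≤ n := Nat.find_le (by rw [hS]; exact notMem_empty _)
    have hmem : (z : X) ∈ Sder Z k := by
      rcases Nat.eq_zero_or_pos k with h0 | hpos
      · rw [h0]; exact z.2
      · have := Nat.find_min hex (m := k - 1) (by omega)
        rw [not_not] at this
        have hk1 : k - 1 + 1 = k := by omega
        rwa [hk1] at this
    refine ⟨⟨k, by omega⟩, ⟨hmem, Nat.find_spec hex⟩, ?_⟩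
    rintro i ⟨hi1, hi2⟩
    have hik : (i : ℕ) = k := by
      by_contra hne
      rcases Nat.lt_or_ge (i : ℕ) k with hlt | hge
      · exact (Nat.find_min hex hlt) hi2
      · have h6 : (z : X) ∈ Sder Z (k+1) := Sder_antitone Z (by omega) hi1
        exact absurd h6 (Nat.find_spec hex)
    exact Fin.ext (by simpa using hik)
  · rintro i D hDP hc hinf hdisc j hji x hxj hacc
    have hE : (Subtype.val '' D : Set X) ⊆ Sder Z i := by
      rintro y ⟨d, hd, rfl⟩
      exact (hDP hd).1
    have hxFa : (x : X) ∈ Fa (Sder Z j) := by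
      refine Fa.mono (Sder_antitone Z (by exact_mod_cast hji)) ?_
      exact ⟨Subtype.val '' D, hE, hc.image _, image_dset hZo hdisc, image_accPt hacc⟩
    exact hxj.2 ⟨hxj.1, hxFa⟩

lemma AccPt.nonempty {x : X} {D : Set X} (h : AccPt x (𝓟 D)) : D.Nonempty := by
  rcases D.eq_empty_or_nonempty with rfl | hne
  · have := h.mem_closure
    simp at this
  · exact hne

section Fans

variable (Y V' : Set X)

def FanInv (s : Set X × (X → Set X) × Set X) : Prop :=
  s.1.Nonempty ∧ s.1.Countable ∧ s.1 ⊆ Y ∧ s.1 ⊆ s.2.2 ∧ s.2.2.Countable ∧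
  (∀ p ∈ s.1, IsOpen (s.2.1 p) ∧ p ∈ s.2.1 p ∧ s.2.1 p ⊆ V' ∧ s.2.1 p ∩ s.2.2 = {p}) ∧
  s.1.PairwiseDisjoint s.2.1

def FanStp (s t : Set X × (X → Set X) × Set X) : Prop :=
  t.2.2 = s.2.2 ∪ t.1 ∧ Disjoint t.1 s.2.2 ∧ s.1 ⊆ closure t.1

variable {Y V'}

lemma fan_step (hsd : ∀ y ∈ Y, ∃ D, D ⊆ Y ∧ D.Countable ∧ DSet D ∧ AccPt y (𝓟 D))
    (s : Set X × (X → Set X) × Set X) (hs : FanInv Y V' s) :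
    ∃ t, FanInv Y V' t ∧ FanStp s t := by
  classical
  obtain ⟨hne, hcnt, hYs, hsB, hBcnt, hcond, hdisj⟩ := hs
  have hch : ∀ p : X, ∃ (D : Set X) (U : X → Set X), p ∈ s.1 →
      D ⊆ Y ∧ D.Countable ∧ AccPt p (𝓟 D) ∧ D ⊆ s.2.1 p ∧ p ∉ D ∧
      (∀ q ∈ D, IsOpen (U q) ∧ q ∈ U q ∧ U q ∩ D ⊆ {q} ∧ U q ⊆ s.2.1 p ∧ p ∉ U q) ∧
      D.PairwiseDisjoint U := by
    intro p
    by_cases hp : p ∈ s.1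
    · obtain ⟨D₀, hD₀Y, hD₀c, hD₀d, hD₀a⟩ := hsd p (hYs hp)
      obtain ⟨hρo, hpρ, hρV, hρB⟩ := hcond p hp
      set D : Set X := (D₀ ∩ s.2.1 p) \ {p} with hD
      have hacc : AccPt p (𝓟 D) := by
        rw [hD, accPt_diff_singleton]
        exact accPt_inter_of_mem_nhds (hρo.mem_nhds hpρ) hD₀a
      have hDsub : D ⊆ D₀ := diff_subset.trans inter_subset_left
      obtain ⟨U₀, hU₀, hU₀d⟩ := strongly_discrete (hD₀c.mono hDsub) (hD₀d.mono hDsub)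
      refine ⟨D, fun q => U₀ q ∩ s.2.1 p ∩ {p}ᶜ, fun _ => ?_⟩
      refine ⟨hDsub.trans hD₀Y, hD₀c.mono hDsub, hacc,
        diff_subset.trans inter_subset_right, fun hc => hc.2 rfl, ?_, ?_⟩
      · intro q hq
        obtain ⟨hqo, hqU, hqD⟩ := hU₀ q hq
        refine ⟨(hqo.inter hρo).inter isClosed_singleton.isOpen_compl,
          ⟨⟨hqU, (diff_subset.trans inter_subset_right) hq⟩, hq.2⟩,
          fun y hy => hqD ⟨hy.1.1.1, hy.2⟩, inter_subset_left.trans inter_subset_right,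
          fun hc => hc.2 rfl⟩
      · intro a ha b hb hab
        exact (hU₀d ha hb hab).mono (inter_subset_left.trans inter_subset_left)
          (inter_subset_left.trans inter_subset_left)
    · exact ⟨∅, fun _ => ∅, fun hc => absurd hc hp⟩
  choose D U hDU using hch
  set C' : Set X := ⋃ p ∈ s.1, D p with hC'
  have hsame : ∀ p p', p ∈ s.1 → p' ∈ s.1 → ∀ q, q ∈ D p → q ∈ D p' → p = p' := by
    intro p p' hp hp' q hq hq'
    by_contra hpp
    have h1 := (hDU p hp).2.2.2.1 hq
    have h2 := (hDU p' hp').2.2.2.1 hq'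
    exact (Set.disjoint_left.1 (hdisj hp hp' hpp)) h1 h2
  set ρ' : X → Set X := fun q =>
    if h : ∃ p, p ∈ s.1 ∧ q ∈ D p then U h.choose q else ∅ with hρ'
  have hρval : ∀ p q, p ∈ s.1 → q ∈ D p → ρ' q = U p q := by
    intro p q hp hq
    have h : ∃ p, p ∈ s.1 ∧ q ∈ D p := ⟨p, hp, hq⟩
    have hcp := hsame _ _ h.choose_spec.1 hp _ h.choose_spec.2 hq
    simp only [hρ', dif_pos h, hcp]
  have hC'B : Disjoint C' s.2.2 := by
    rw [Set.disjoint_left]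
    rintro q hq hqB
    obtain ⟨p, hp, hqD⟩ := by simpa [hC'] using hq
    have h4 := (hDU p hp).2.2.2.1 hqD
    have h5 := (hcond p hp).2.2.2
    have : q ∈ s.2.1 p ∩ s.2.2 := ⟨h4, hqB⟩
    rw [h5] at this
    exact (hDU p hp).2.2.2.2.1 (this ▸ hqD)
  refine ⟨(C', ρ', s.2.2 ∪ C'), ⟨?_, ?_, ?_, ?_, ?_, ?_, ?_⟩, rfl, hC'B, ?_⟩
  · obtain ⟨p, hp⟩ := hne
    obtain ⟨q, hq⟩ := (hDU p hp).2.2.1.nonempty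
    exact ⟨q, Set.mem_biUnion hp hq⟩
  · exact hcnt.biUnion (fun p hp => (hDU p hp).2.1)
  · rintro q hq
    obtain ⟨p, hp, hqD⟩ := by simpa [hC'] using hq
    exact (hDU p hp).1 hqD
  · exact fun q hq => Set.mem_union_right _ hq
  · exact hBcnt.union (hcnt.biUnion (fun p hp => (hDU p hp).2.1))
  · rintro q hq
    obtain ⟨p, hp, hqD⟩ := by simpa [hC'] using hq
    show IsOpen (ρ' q) ∧ q ∈ ρ' q ∧ ρ' q ⊆ V' ∧ ρ' q ∩ (s.2.2 ∪ C') = {q}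
    rw [hρval p q hp hqD]
    obtain ⟨hUo, hqU, hUD, hUρ, hpU⟩ := (hDU p hp).2.2.2.2.2.1 q hqD
    refine ⟨hUo, hqU, hUρ.trans (hcond p hp).2.2.1, ?_⟩
    ext y
    simp only [Set.mem_inter_iff, Set.mem_union, Set.mem_singleton_iff]
    constructor
    · rintro ⟨hyU, hyB | hyC⟩
      · exfalso
        have : y ∈ s.2.1 p ∩ s.2.2 := ⟨hUρ hyU, hyB⟩
        rw [(hcond p hp).2.2.2] at this
        exact hpU (this ▸ hyU)
      · obtain ⟨p', hp', hyD⟩ := by simpa [hC'] using hyC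
        rcases eq_or_ne p' p with rfl | hne2
        · exact hUD ⟨hyU, hyD⟩
        · exfalso
          have h7 := (hDU p' hp').2.2.2.1 hyD
          exact (Set.disjoint_left.1 (hdisj hp' hp hne2)) h7 (hUρ hyU)
    · rintro rfl
      exact ⟨hqU, Or.inr (Set.mem_biUnion hp hqD)⟩
  · intro a ha b hb hab
    obtain ⟨p, hp, haD⟩ := by simpa [hC'] using ha
    obtain ⟨p', hp', hbD⟩ := by simpa [hC'] using hb
    show Disjoint (ρ' a) (ρ' b)
    rw [hρval p a hp haD, hρval p' b hp' hbD]
    rcases eq_or_ne p p' with rfl | hpp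
    · exact (hDU p hp).2.2.2.2.2.2 haD hbD hab
    · refine Set.disjoint_left.2 fun y hy hy' => ?_
      have h8 := ((hDU p hp).2.2.2.2.2.1 a haD).2.2.2.1 hy
      have h9 := ((hDU p' hp').2.2.2.2.2.1 b hbD).2.2.2.1 hy'
      exact (Set.disjoint_left.1 (hdisj hp hp' hpp)) h8 h9
  · rintro p hp
    exact closure_mono (Set.subset_biUnion_of_mem (u := fun p => D p) hp)
      (hDU p hp).2.2.1.mem_closure

end Fans

section SD

variable {Y : Set X}

def IsFan (Y V' : Set X) (L : ℕ → Set X) : Prop :=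
  (∀ k, (L k).Nonempty) ∧ (∀ k, L k ⊆ Y ∩ V') ∧ Pairwise (Function.onFun Disjoint L) ∧
  ∀ k, L k ⊆ closure (L (k+1))

def suppF (L : ℕ → Set X) : Set X := ⋃ k, L k

lemma fan_chain {L : ℕ → Set X} (hL : ∀ k, L k ⊆ closure (L (k+1))) :
    ∀ k j, k ≤ j → L k ⊆ closure (L j) := by
  intro k j hkj
  induction j, hkj using Nat.le_induction with
  | base => exact subset_closure
  | succ j hkj ih =>
    refine ih.trans ?_
    rw [← closure_closure (s := L (j+1))]
    exact closure_mono (hL j)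

lemma fan_exists (hsd : ∀ y ∈ Y, ∃ D, D ⊆ Y ∧ D.Countable ∧ DSet D ∧ AccPt y (𝓟 D))
    {V' : Set X} (hV'o : IsOpen V') {y : X} (hyY : y ∈ Y) (hyV : y ∈ V') :
    ∃ L : ℕ → Set X, IsFan Y V' L := by
  classical
  haveI : Nonempty (Set X × (X → Set X) × Set X) := ⟨(∅, fun _ => ∅, ∅)⟩
  set s₀ : Set X × (X → Set X) × Set X := ({y}, fun _ => V', {y}) with hs₀
  have hs₀inv : FanInv Y V' s₀ := by
    refine ⟨singleton_nonempty y, countable_singleton y, by simpa [hs₀] using hyY,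
      subset_rfl, countable_singleton y, ?_, ?_⟩
    · rintro p hp
      rw [mem_singleton_iff] at hp
      subst hp
      exact ⟨hV'o, hyV, subset_rfl,
        Set.inter_eq_self_of_subset_right (Set.singleton_subset_iff.2 hyV)⟩
    · intro a ha b hb hab
      simp only [hs₀, mem_singleton_iff] at ha hb
      exact absurd (ha.trans hb.symm) hab
  obtain ⟨v, hv⟩ := depRec
    (P := fun n w => w 0 = s₀ ∧ FanInv Y V' (w n) ∧ ∀ m, m + 1 = n → FanStp (w m) (w n))
    (by
      rintro n w w' hww ⟨h0, h1, h2⟩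
      refine ⟨(hww 0 (Nat.zero_le n)).symm.trans h0, (hww n le_rfl) ▸ h1, ?_⟩
      intro m hm
      rw [← hww n le_rfl, ← hww m (by omega)]
      exact h2 m hm)
    (by
      intro n w hw
      rcases n with _ | m
      · exact ⟨s₀, by rw [Function.update_self], by rw [Function.update_self]; exact hs₀inv,
          fun m hm => absurd hm (by omega)⟩
      · obtain ⟨t, htinv, htstp⟩ := fan_step hsd (w m) (hw m (by omega)).2.1
        refine ⟨t, ?_, ?_, ?_⟩
        · rw [Function.update_of_ne (by omega)]
          exact (hw m (by omega)).1
        · rw [Function.update_self]; exact htinv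
        · intro m' hm'
          have : m' = m := by omega
          subst this
          rw [Function.update_self, Function.update_of_ne (by omega)]
          exact htstp)
  refine ⟨fun k => (v k).1, ?_, ?_, ?_, ?_⟩
  · exact fun k => (hv k).2.1.1
  · intro k
    intro p hp
    have hcond := (hv k).2.1.2.2.2.2.2.1 p hp
    exact ⟨(hv k).2.1.2.2.1 hp, hcond.2.2.1 hcond.2.1⟩
  · -- pairwise disjoint levels
    have hstep : ∀ k, (v (k+1)).2.2 = (v k).2.2 ∪ (v (k+1)).1 ∧
        Disjoint ((v (k+1)).1) ((v k).2.2) :=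
      fun k => ⟨((hv (k+1)).2.2 k rfl).1, ((hv (k+1)).2.2 k rfl).2.1⟩
    have hBmono : ∀ a b, a ≤ b → (v a).2.2 ⊆ (v b).2.2 := by
      intro a b hab
      induction b, hab using Nat.le_induction with
      | base => exact subset_rfl
      | succ b hab ih => exact ih.trans (by rw [(hstep b).1]; exact subset_union_left)
    have key : ∀ j k, j < k → Disjoint ((v j).1) ((v k).1) := by
      intro j k hjk
      have hLB : (v j).1 ⊆ (v j).2.2 := (hv j).2.1.2.2.2.1
      rcases Nat.exists_eq_add_of_lt hjk with ⟨c, rfl⟩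
      have h2 : (v j).1 ⊆ (v (j + c)).2.2 := hLB.trans (hBmono _ _ (by omega))
      have h3 := (hstep (j + c)).2
      exact (h3.mono_right h2).symm
    intro a b hab
    rcases Nat.lt_or_ge a b with h | h
    · exact key a b h
    · exact (key b a (by omega)).symm
  · exact fun k => ((hv (k+1)).2.2 k rfl).2.2

lemma sd_dense_sets {V Y : Set X} (hVo : IsOpen V) (hYV : Y ⊆ V) (hYd : V ⊆ closure Y)
    (hsd : ∀ y ∈ Y, ∃ D, D ⊆ Y ∧ D.Countable ∧ DSet D ∧ AccPt y (𝓟 D)) :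
    ∃ E : ℕ → Set X, (∀ n, E n ⊆ V) ∧ (∀ n, V ⊆ closure (E n)) ∧
      Pairwise (Function.onFun Disjoint E) := by
  classical
  set 𝒜 : Set (Set (ℕ → Set X)) :=
    {F | (∀ L ∈ F, IsFan Y V L) ∧ F.Pairwise fun L M => Disjoint (suppF L) (suppF M)} with h𝒜
  obtain ⟨F, hFmax⟩ := zorn_subset 𝒜 (by
    intro c hc hchain
    refine ⟨⋃₀ c, ⟨?_, ?_⟩, fun s hs => subset_sUnion_of_mem hs⟩
    · rintro L ⟨F₀, hF₀, hLF₀⟩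
      exact (hc hF₀).1 L hLF₀
    · rintro L ⟨F₁, hF₁, hLF₁⟩ M ⟨F₂, hF₂, hMF₂⟩ hLM
      rcases hchain.total hF₁ hF₂ with h | h
      · exact (hc hF₂).2 (h hLF₁) hMF₂ hLM
      · exact (hc hF₁).2 hLF₁ (h hMF₂) hLM)
  have hF𝒜 : F ∈ 𝒜 := hFmax.prop
  set Q : Set X := ⋃ L ∈ F, suppF L with hQ
  have hQd : V ⊆ closure Q := by
    by_contra hnd
    rw [Set.not_subset] at hnd
    obtain ⟨x, hxV, hxQ⟩ := hnd
    set V' : Set X := V ∩ (closure Q)ᶜ with hV'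
    have hV'o : IsOpen V' := hVo.inter isClosed_closure.isOpen_compl
    have hxV' : x ∈ V' := ⟨hxV, hxQ⟩
    -- find a point of Y in V'
    have hYx : x ∈ closure Y := hYd hxV
    obtain ⟨y, hyV', hyY⟩ := mem_closure_iff.1 hYx V' hV'o hxV'
    obtain ⟨L, hL⟩ := fan_exists hsd hV'o hyY hyV'
    have hLV : IsFan Y V L := ⟨hL.1, fun k => (hL.2.1 k).trans
      (fun z hz => ⟨hz.1, hz.2.1⟩), hL.2.2.1, hL.2.2.2⟩
    have hLQ : Disjoint (suppF L) Q := by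
      refine Set.disjoint_left.2 fun z hz hzQ => ?_
      obtain ⟨k, hk⟩ := Set.mem_iUnion.1 hz
      exact ((hL.2.1 k hk).2.2 : z ∈ (closure Q)ᶜ) (subset_closure hzQ)
    have hFL : F ∪ {L} ∈ 𝒜 := by
      constructor
      · rintro M (hM | hM)
        · exact hF𝒜.1 M hM
        · rw [mem_singleton_iff] at hM; subst hM; exact hLV
      · rintro M₁ (h1 | h1) M₂ (h2 | h2) h12
        · exact hF𝒜.2 h1 h2 h12
        · rw [mem_singleton_iff] at h2; subst h2
          exact hLQ.symm.mono_left (Set.subset_biUnion_of_mem (u := suppF) h1)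
        · rw [mem_singleton_iff] at h1; subst h1
          exact hLQ.mono_right (Set.subset_biUnion_of_mem (u := suppF) h2)
        · rw [mem_singleton_iff] at h1 h2; subst h1; subst h2; exact absurd rfl h12
    have hLF : L ∈ F := hFmax.2 hFL subset_union_left (Or.inr rfl)
    obtain ⟨z, hz⟩ := (hL.1 0)
    have hzQ : z ∈ Q := Set.mem_biUnion hLF (Set.mem_iUnion.2 ⟨0, hz⟩)
    exact (Set.disjoint_left.1 hLQ) (Set.mem_iUnion.2 ⟨0, hz⟩) hzQ
  -- coloring
  set E : ℕ → Set X := fun m => ⋃ L ∈ F, ⋃ (j : ℕ) (_ : (Nat.unpair j).1 = m ∧ 1 ≤ j), L j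
    with hE
  refine ⟨E, ?_, ?_, ?_⟩
  · intro n
    rintro x hx
    simp only [hE, Set.mem_iUnion] at hx
    obtain ⟨L, hLF, j, hj, hxL⟩ := hx
    exact ((hF𝒜.1 L hLF).2.1 j hxL).2
  · intro n
    refine hQd.trans ?_
    rw [← closure_closure (s := E n)]
    refine closure_mono ?_
    rintro q hq
    simp only [hQ, suppF, Set.mem_iUnion] at hq
    obtain ⟨L, hLF, k, hk⟩ := hq
    set j : ℕ := Nat.pair n (k + 1) with hj
    have hj1 : (Nat.unpair j).1 = n := by simp [hj]
    have hj2 : k ≤ j := le_trans (by omega) (Nat.right_le_pair n (k+1))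
    have hj3 : 1 ≤ j := le_trans (by omega) (Nat.right_le_pair n (k+1))
    have hcl : L k ⊆ closure (L j) := fan_chain (hF𝒜.1 L hLF).2.2.2 k j hj2
    have hsub : L j ⊆ E n := by
      intro x hx
      simp only [hE, Set.mem_iUnion]
      exact ⟨L, hLF, j, ⟨hj1, hj3⟩, hx⟩
    exact closure_mono hsub (hcl hk)
  · intro a b hab
    refine Set.disjoint_left.2 fun x hxa hxb => ?_
    simp only [hE, Set.mem_iUnion] at hxa hxb
    obtain ⟨L, hLF, j, ⟨hj1, hj2⟩, hxL⟩ := hxa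
    obtain ⟨M, hMF, j', ⟨hj1', hj2'⟩, hxM⟩ := hxb
    rcases eq_or_ne L M with rfl | hLM
    · have hjj : j ≠ j' := fun hc => hab (by rw [← hj1, ← hj1', hc])
      exact (Set.disjoint_left.1 ((hF𝒜.1 L hLF).2.2.1 hjj)) hxL hxM
    · have h1 : x ∈ suppF L := Set.mem_iUnion.2 ⟨j, hxL⟩
      have h2 : x ∈ suppF M := Set.mem_iUnion.2 ⟨j', hxM⟩
      exact (Set.disjoint_left.1 (hF𝒜.2 hLF hMF hLM)) h1 h2

end SD

lemma omega_of_sets {V : Set X} (E : ℕ → Set X) (hEV : ∀ n, E n ⊆ V)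
    (hEd : ∀ n, V ⊆ closure (E n)) (hEp : Pairwise (Function.onFun Disjoint E)) :
    OmegaResolvable ↥V := by
  refine ⟨fun n => Subtype.val ⁻¹' E n, fun n => ?_,
    fun a b hab => Disjoint.preimage _ (hEp hab)⟩
  rw [dense_iff_inter_open]
  rintro U hU hUne
  obtain ⟨U₀, hU₀o, rfl⟩ := isOpen_induced_iff.1 hU
  obtain ⟨z, hz⟩ := hUne
  have hcl : (z : X) ∈ closure (E n) := hEd n z.2
  obtain ⟨w, hwU, hwE⟩ := mem_closure_iff.1 hcl U₀ hU₀o hz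
  exact ⟨⟨w, hEV n hwE⟩, hwU, hwE⟩

lemma goodPartition_pi_base_aux (h : ∀ U : Set X, IsOpen U → U.Nonempty → ¬ OmegaResolvable U) :
    ∀ W : Set X, IsOpen W → W.Nonempty →
      ∃ Z : Set X, IsOpen Z ∧ Z.Nonempty ∧ Z ⊆ W ∧
        ∃ (n : ℕ) (P : Fin n → Set Z), GoodPartition n P := by
  classical
  intro W hWo hWne
  by_contra hcon
  -- every derivative level of every open subset of W is nonempty
  have hSne : ∀ Z : Set X, IsOpen Z → Z.Nonempty → Z ⊆ W → ∀ n, (Sder Z n).Nonempty := by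
    intro Z hZo hZne hZW n
    by_contra hemp
    rw [Set.not_nonempty_iff_eq_empty] at hemp
    cases n with
    | zero => exact absurd (hemp : Sder Z 0 = ∅) hZne.ne_empty
    | succ m =>
      obtain ⟨P, hP⟩ := case1 hZo hemp
      exact hcon ⟨Z, hZo, hZne, hZW, m+1, P, hP⟩
  set E_ : ℕ → Set X := fun m => Sder W m \ Sder W (m+1) with hE_
  have stepdown : ∀ m, E_ (m+1) ⊆ closure (E_ m) := by
    intro m x hx
    have hx1 : x ∈ Sder W m ∩ Fa (Sder W m) := hx.1
    obtain ⟨hxm, D, hDsub, hDc, hDd, hDa⟩ := hx1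
    have hsplit : D = (D ∩ Sder W (m+1)) ∪ (D \ Sder W (m+1)) :=
      (Set.inter_union_diff D _).symm
    rw [hsplit] at hDa
    rcases (accPt_union _ _).1 hDa with hcase | hcase
    · exfalso
      have hxS2 : x ∈ Sder W (m+2) :=
        ⟨hx.1, D ∩ Sder W (m+1), inter_subset_right, hDc.mono inter_subset_left,
          hDd.mono inter_subset_left, hcase⟩
      exact hx.2 hxS2
    · exact (hcase.mono (principal_mono.2 (diff_subset_diff_left hDsub))).mem_closure
  have downward : ∀ (m t : ℕ) (V : Set X), IsOpen V → (E_ (m+t) ∩ V).Nonempty →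
      (E_ m ∩ V).Nonempty := by
    intro m t
    induction t with
    | zero => exact fun V _ hne => hne
    | succ s ih =>
      intro V hVo hne
      obtain ⟨x, hxE, hxV⟩ := hne
      have hxc : x ∈ closure (E_ (m+s)) := stepdown (m+s) hxE
      obtain ⟨w, hwV, hwE⟩ := mem_closure_iff.1 hxc V hVo hxV
      exact ih V hVo ⟨w, hwE, hwV⟩
  by_cases hdich : ∃ V : Set X, IsOpen V ∧ V.Nonempty ∧ V ⊆ W ∧
      ∃ m : ℕ, ∀ m', m ≤ m' → E_ m' ∩ V = ∅
  · -- there is an open set where, from level m on, all exact levels vanish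
    obtain ⟨V, hVo, hVne, hVW, m, hme⟩ := hdich
    have key1 : V ∩ Sder W m ⊆ ⋂ n, Sder W n := by
      rintro x ⟨hxV, hxm⟩
      rw [Set.mem_iInter]
      intro n
      by_contra hxn
      have hex : ∃ k, x ∉ Sder W k := ⟨n, hxn⟩
      set k := Nat.find hex with hk
      have hxk := Nat.find_spec hex
      have hkm : m < k := by
        rcases Nat.lt_or_ge m k with h' | h'
        · exact h'
        · exact absurd (Sder_antitone W h' hxm) hxk
      have hxk1 : x ∈ Sder W (k-1) := by
        have := Nat.find_min hex (m := k - 1) (by omega)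
        rwa [not_not] at this
      have hkk : k - 1 + 1 = k := by omega
      have hxE : x ∈ E_ (k-1) := ⟨hxk1, by rw [hkk]; exact hxk⟩
      have := hme (k-1) (by omega)
      rw [Set.eq_empty_iff_forall_notMem] at this
      exact this x ⟨hxE, hxV⟩
    set Y : Set X := (⋂ n, Sder W n) ∩ V with hY
    have hYV : Y ⊆ V := inter_subset_right
    have hYd : V ⊆ closure Y := by
      intro x hxV
      rw [mem_closure_iff]
      intro U hUo hxU
      have hV''ne : (U ∩ V).Nonempty := ⟨x, hxU, hxV⟩
      obtain ⟨z, hz⟩ := hSne (U ∩ V) (hUo.inter hVo) hV''ne (inter_subset_right.trans hVW) m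
      have hzUV : z ∈ U ∩ V := Sder_subset _ m hz
      have hzm : z ∈ Sder W m := Sder_mono (inter_subset_right.trans hVW) m hz
      exact ⟨z, hzUV.1, key1 ⟨hzUV.2, hzm⟩, hzUV.2⟩
    have hsd : ∀ y ∈ Y, ∃ D, D ⊆ Y ∧ D.Countable ∧ DSet D ∧ AccPt y (𝓟 D) := by
      rintro y ⟨hyG, hyV⟩
      have hyS : y ∈ Sder W (m+1) := by
        rw [Set.mem_iInter] at hyG
        exact hyG (m+1)
      obtain ⟨hym, D, hDS, hDc, hDd, hDa⟩ := (hyS : y ∈ Sder W m ∩ Fa (Sder W m))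
      refine ⟨D ∩ V, ?_, hDc.mono inter_subset_left, hDd.mono inter_subset_left,
        accPt_inter_of_mem_nhds (hVo.mem_nhds hyV) hDa⟩
      rintro z ⟨hzD, hzV⟩
      exact ⟨key1 ⟨hzV, hDS hzD⟩, hzV⟩
    obtain ⟨E, hEV, hEd, hEp⟩ := sd_dense_sets hVo hYV hYd hsd
    exact h V hVo hVne (omega_of_sets E hEV hEd hEp)
  · -- all exact levels are dense in W
    have hdense : ∀ (m : ℕ) (V : Set X), IsOpen V → V.Nonempty → V ⊆ W →
        (E_ m ∩ V).Nonempty := by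
      intro m V hVo hVne hVW
      have hex : ∃ m', m ≤ m' ∧ (E_ m' ∩ V).Nonempty := by
        by_contra hno
        push_neg at hno
        exact hdich ⟨V, hVo, hVne, hVW, m, fun m' hm' => hno m' hm'⟩
      obtain ⟨m', hm1, hm2⟩ := hex
      obtain ⟨t, rfl⟩ : ∃ t, m' = m + t := ⟨m' - m, by omega⟩
      exact downward m t V hVo hm2
    refine h W hWo hWne (omega_of_sets E_ (fun m => diff_subset.trans (Sder_subset W m))
      ?_ ?_)
    · intro m x hxW
      rw [mem_closure_iff]
      intro U hUo hxU
      obtain ⟨w, hwE, hwU, hwW⟩ := hdense m (U ∩ W) (hUo.inter hWo) ⟨x, hxU, hxW⟩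
        inter_subset_right
      exact ⟨w, hwU, hwE⟩
    · have hkey : ∀ a b : ℕ, a < b → Disjoint (E_ a) (E_ b) := by
        intro a b hab
        refine Set.disjoint_left.2 fun x hxa hxb => ?_
        exact hxa.2 (Sder_antitone W (by omega : a + 1 ≤ b) hxb.1)
      intro a b hab
      rcases Nat.lt_or_ge a b with h' | h'
      · exact hkey a b h'
      · exact (hkey b a (by omega)).symm

end Aux

theorem goodPartition_pi_base (X : Type u) [TopologicalSpace X] [T3Space X]
    (h : ∀ U : Set X, IsOpen U → U.Nonempty → ¬ OmegaResolvable U) :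
    ∀ W : Set X, IsOpen W → W.Nonempty →
      ∃ Z : Set X, IsOpen Z ∧ Z.Nonempty ∧ Z ⊆ W ∧
        ∃ (n : ℕ) (P : Fin n → Set Z), GoodPartition n P :=
  goodPartition_pi_base_aux h
end

section
/- In a regular topological space, every countable discrete subspace is strongly discrete: its points can be separated by pairwise disjoint open sets. -/
/-!
Enumerate `D` injectively and, using regularity and discreteness, pick for each `d ∈ D` an open
`W d ∋ d` whose closure meets `D` only in `d`. Then `U d := W d \ ⋃ {closure (W e) | e ∈ D earlier
than d}` is open, since only finitely many points come earlier, still contains `d`, and two such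
sets are disjoint because the later one avoids the closure of the earlier one's `W`.
-/

open Set Topology

section

variable {X : Type*} [TopologicalSpace X]

theorem exists_isOpen_mem_closure_inter_subset_singleton [RegularSpace X] {D : Set X}
    [DiscreteTopology D] {d : X} (hd : d ∈ D) :
    ∃ W : Set X, IsOpen W ∧ d ∈ W ∧ closure W ∩ D ⊆ {d} := by
  obtain ⟨V, hVo, hVD⟩ := discreteTopology_subtype_iff'.mp ‹_› d hd
  have hdV : d ∈ V := (hVD.symm ▸ mem_singleton d : d ∈ V ∩ D).1
  obtain ⟨W, ⟨hdW, hWo⟩, hWV⟩ := (hasBasis_opens_closure d).mem_iff.mp (hVo.mem_nhds hdV)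
  exact ⟨W, hWo, hdW, hVD ▸ inter_subset_inter_left D hWV⟩

theorem exists_pairwiseDisjoint_of_closure_inter_subset_singleton {ι : Type*} [LinearOrder ι]
    [LocallyFiniteOrderBot ι] {D : Set X} {rank : X → ι} (hrank : InjOn rank D)
    {W : X → Set X} (hWo : ∀ d ∈ D, IsOpen (W d)) (hWd : ∀ d ∈ D, d ∈ W d)
    (hWD : ∀ d ∈ D, closure (W d) ∩ D ⊆ {d}) :
    ∃ U : X → Set X, (∀ d ∈ D, IsOpen (U d) ∧ d ∈ U d) ∧ D.PairwiseDisjoint U := by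
  let earlier (d : X) : Set X := {e ∈ D | rank e < rank d}
  have earlier_finite (d : X) : (earlier d).Finite :=
    ((finite_Iio (rank d)).subset (image_subset_iff.mpr fun _ he ↦ he.2)).of_finite_image
      (hrank.mono fun _ he ↦ he.1)
  let U (d : X) : Set X := W d \ ⋃ e ∈ earlier d, closure (W e)
  have disjoint_of_lt {d e : X} (h : rank e < rank d) (he : e ∈ D) : Disjoint (U e) (U d) :=
    disjoint_left.mpr fun _ hxe hxd ↦
      hxd.2 (mem_biUnion (show e ∈ earlier d from ⟨he, h⟩) (subset_closure hxe.1))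
  refine ⟨U, fun d hd ↦ ⟨?_, ?_⟩, fun d hd e he hde ↦ ?_⟩
  · exact (hWo d hd).sdiff ((earlier_finite d).isClosed_biUnion fun _ _ ↦ isClosed_closure)
  · refine ⟨hWd d hd, fun hd' ↦ ?_⟩
    obtain ⟨e, ⟨he, hed⟩, hde⟩ := mem_iUnion₂.mp hd'
    rw [show d = e from hWD e he ⟨hde, hd⟩] at hed
    exact hed.false
  · rcases lt_or_gt_of_ne (hrank.ne hd he hde) with h | h
    · exact disjoint_of_lt h hd
    · exact (disjoint_of_lt h he).symm

end

theorem countable_discrete_strongly_discrete {X : Type*} [TopologicalSpace X] [T3Space X]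
    (D : Set X) (hcnt : D.Countable) (hdisc : DiscreteTopology D) :
    ∃ U : X → Set X, (∀ d ∈ D, IsOpen (U d) ∧ d ∈ U d) ∧ D.PairwiseDisjoint U := by
  obtain ⟨rank, hrank⟩ := countable_iff_exists_injOn.mp hcnt
  have hW (d : X) (hd : d ∈ D) : ∃ W : Set X, IsOpen W ∧ d ∈ W ∧ closure W ∩ D ⊆ {d} :=
    exists_isOpen_mem_closure_inter_subset_singleton hd
  choose! W hWo hWd hWD using hW
  exact exists_pairwiseDisjoint_of_closure_inter_subset_singleton hrank hWo hWd hWD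
end

section
/- Let X be a regular space, and let ℒ be a π-network of X such that each L ∈ ℒ carries a subset H_L and a pairwise disjoint family {X_{L,α} : α < ω₁} of subsets of L, each of cardinality ω₁, satisfying: for every α < ω₁ and every Y ⊆ X_{L,α} of cardinality ω₁, the set of complete accumulation points of Y in L is nonempty, and the set of complete accumulation points of X_{L,α} in L equals H_L. Let 𝒦 ⊆ ℒ be maximal with the property that for any two distinct K, L ∈ 𝒦 and any α, β < ω₁, |X_{K,α} ∩ X_{L,β}| ≤ ω. Then ⋃{H_K : K ∈ 𝒦} is dense in X. -/
/-!
Regularity and the π-network put some `L ∈ ℒ` with `closure L ⊆ U` inside any nonempty open `U`.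
Some `K ∈ 𝒦` has `X_{K,α} ∩ X_{L,β}` uncountable: `K = L`, `α = β` if `L ∈ 𝒦`, otherwise by
maximality of `𝒦`. A complete accumulation point in `K` of that intersection lies in `H_K`, and
in `closure L ⊆ U` because the intersection lies in `L`.
-/

open Cardinal

universe u

/-- The set of complete accumulation points of an (uncountable, size-ω₁) set `S`
computed in the subspace `L`: points of `L` each of whose neighborhoods meets `S`
in an uncountable set. -/
def CAP {X : Type u} [TopologicalSpace X] (L S : Set X) : Set X :=
  {x ∈ L | ∀ U : Set X, IsOpen U → x ∈ U → ¬ (U ∩ S).Countable}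

theorem Set.not_countable_iff_aleph_one_le {α : Type*} {s : Set α} :
    ¬ s.Countable ↔ aleph 1 ≤ #s := by
  rw [← le_aleph0_iff_set_countable, not_le, aleph_one_le_iff]

theorem mk_eq_aleph_one_of_subset {α : Type*} {Y S : Set α} (hYS : Y ⊆ S) (hS : #S = aleph 1)
    (hY : ¬ Y.Countable) : #Y = aleph 1 :=
  le_antisymm (hS ▸ mk_le_mk_of_subset hYS) (Set.not_countable_iff_aleph_one_le.1 hY)

section CAP

variable {X : Type u} [TopologicalSpace X]

theorem CAP_mono {L Y S : Set X} (hYS : Y ⊆ S) : CAP L Y ⊆ CAP L S :=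
  fun _ ⟨hxL, hx⟩ => ⟨hxL, fun U hU hxU hS =>
    hx U hU hxU (hS.mono (Set.inter_subset_inter_right U hYS))⟩

theorem CAP_subset_closure (L S : Set X) : CAP L S ⊆ closure S := by
  rintro x ⟨-, hx⟩
  rw [mem_closure_iff]
  intro U hU hxU
  by_contra hempty
  exact hx U hU hxU (Set.not_nonempty_iff_eq_empty.1 hempty ▸ Set.countable_empty)

theorem CAP_inter_closure_nonempty {L S Y : Set X} (hS : #S = aleph 1)
    (happ : ∀ Y ⊆ S, #Y = aleph 1 → (CAP L Y).Nonempty) (hYS : Y ⊆ S) (hY : ¬ Y.Countable) :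
    (CAP L S ∩ closure Y).Nonempty := by
  obtain ⟨y, hy⟩ := happ Y hYS (mk_eq_aleph_one_of_subset hYS hS hY)
  exact ⟨y, CAP_mono hYS hy, CAP_subset_closure L Y hy⟩

end CAP

theorem exists_mem_closure_subset_of_isOpen {X : Type u} [TopologicalSpace X] [RegularSpace X]
    {ℒ : Set (Set X)} (hπ : ∀ U : Set X, IsOpen U → U.Nonempty → ∃ L ∈ ℒ, L.Nonempty ∧ L ⊆ U)
    {U : Set X} (hU : IsOpen U) (hUne : U.Nonempty) : ∃ L ∈ ℒ, closure L ⊆ U := by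
  obtain ⟨x, hx⟩ := hUne
  obtain ⟨s, hs, hsc, hsU⟩ := exists_mem_nhds_isClosed_subset (hU.mem_nhds hx)
  obtain ⟨L, hL, -, hLs⟩ := hπ (interior s) isOpen_interior ⟨x, mem_interior_iff_mem_nhds.2 hs⟩
  exact ⟨L, hL, (closure_minimal (hLs.trans interior_subset) hsc).trans hsU⟩

theorem dense_union_of_maximal_ad_general {X : Type u} [TopologicalSpace X] [T3Space X]
    {ι : Type u} (hι : #ι = aleph 1)
    (ℒ : Set (Set X))
    (hπ : ∀ U : Set X, IsOpen U → U.Nonempty → ∃ L ∈ ℒ, L.Nonempty ∧ L ⊆ U)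
    (H : Set X → Set X) (F : Set X → ι → Set X)
    (hsub : ∀ L ∈ ℒ, ∀ α : ι, F L α ⊆ L)
    (hcard : ∀ L ∈ ℒ, ∀ α : ι, #↥(F L α) = aleph 1)
    (happ : ∀ L ∈ ℒ, ∀ α : ι, ∀ Y ⊆ F L α, #↥Y = aleph 1 → (CAP L Y).Nonempty)
    (hcap : ∀ L ∈ ℒ, ∀ α : ι, CAP L (F L α) = H L)
    (𝒦 : Set (Set X)) (h𝒦 : 𝒦 ⊆ ℒ)
    (hmax : ∀ L ∈ ℒ, L ∉ 𝒦 → ∃ K ∈ 𝒦, ∃ α β : ι, ¬ (F K α ∩ F L β).Countable) :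
    Dense (⋃ K ∈ 𝒦, H K) := by
  rw [dense_iff_inter_open]
  intro U hU hUne
  obtain ⟨L, hLℒ, hLU⟩ := exists_mem_closure_subset_of_isOpen hπ hU hUne
  obtain ⟨K, hK, α, β, hunc⟩ : ∃ K ∈ 𝒦, ∃ α β : ι, ¬ (F K α ∩ F L β).Countable := by
    by_cases hL : L ∈ 𝒦
    · obtain ⟨α⟩ : Nonempty ι := mk_ne_zero_iff.1 (hι ▸ (aleph_pos 1).ne')
      refine ⟨L, hL, α, α, ?_⟩
      rw [Set.inter_self, Set.not_countable_iff_aleph_one_le, hcard L hLℒ α]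
    · exact hmax L hLℒ hL
  have hKℒ := h𝒦 hK
  obtain ⟨y, hyH, hyL⟩ := CAP_inter_closure_nonempty (hcard K hKℒ α) (happ K hKℒ α)
    Set.inter_subset_left hunc
  rw [hcap K hKℒ α] at hyH
  exact ⟨y, hLU (closure_mono (Set.inter_subset_right.trans (hsub L hLℒ β)) hyL),
    Set.mem_iUnion₂.2 ⟨K, hK, hyH⟩⟩

theorem dense_union_of_maximal_ad {X : Type u} [TopologicalSpace X] [T3Space X]
    {ι : Type u} (hι : #ι = aleph 1)
    (ℒ : Set (Set X))
    (hπ : ∀ U : Set X, IsOpen U → U.Nonempty → ∃ L ∈ ℒ, L.Nonempty ∧ L ⊆ U)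
    (H : Set X → Set X) (F : Set X → ι → Set X)
    (hsub : ∀ L ∈ ℒ, ∀ α : ι, F L α ⊆ L)
    (hdisj : ∀ L ∈ ℒ, Pairwise (Function.onFun Disjoint (F L)))
    (hcard : ∀ L ∈ ℒ, ∀ α : ι, #↥(F L α) = aleph 1)
    (happ : ∀ L ∈ ℒ, ∀ α : ι, ∀ Y ⊆ F L α, #↥Y = aleph 1 → (CAP L Y).Nonempty)
    (hcap : ∀ L ∈ ℒ, ∀ α : ι, CAP L (F L α) = H L)
    (𝒦 : Set (Set X)) (h𝒦 : 𝒦 ⊆ ℒ)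
    (had : ∀ K ∈ 𝒦, ∀ L ∈ 𝒦, K ≠ L → ∀ α β : ι, (F K α ∩ F L β).Countable)
    (hmax : ∀ L ∈ ℒ, L ∉ 𝒦 → ∃ K ∈ 𝒦, ∃ α β : ι, ¬ (F K α ∩ F L β).Countable) :
    Dense (⋃ K ∈ 𝒦, H K) :=
  dense_union_of_maximal_ad_general hι ℒ hπ H F hsub hcard happ hcap 𝒦 h𝒦 hmax
end

section
/- Let X be a regular space with uncountable dispersion character that is generated by its subspaces of countable extent. If additionally X is not ω-resolvable and no nonempty open subset of X is ω-resolvable, then the set T = {x ∈ X : t(x, X) > ω} of points of uncountable tightness is dense in X. -/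
universe u

/-- A space has countable extent. -/
def CountableExtent (Y : Type u) [TopologicalSpace Y] : Prop :=
  ∀ A : Set Y, ¬ A.Countable → ∃ x : Y, AccPt x (Filter.principal A)

/-- The tightness of `x` in `X` is uncountable: there is a set `B` with
`x ∈ closure B` but `x` not in the closure of any countable subset of `B`. -/
def UncountableTightnessAt {X : Type u} [TopologicalSpace X] (x : X) : Prop :=
  ∃ B : Set X, x ∈ closure B ∧ ∀ B' ⊆ B, B'.Countable → x ∉ closure B'

/-!
Pytkeev's argument. If `T` were not dense, some nonempty open `U` would consist of points of
countable tightness. Since countable sets have empty interior, every point of an open `V ⊆ U`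
lies in the closure of `V \ C` for each countable `C`, hence in the closure of a countable subset
of `V \ C`. Iterating this gives disjoint countable sets `A₀, A₁, …` in `V` with
`Aₙ ⊆ closure Aₙ₊₁`, whose union is ω-resolvable. A maximal disjoint family of such sets has
dense union in `U`, so `U` is ω-resolvable.
-/

section

open Set Function

variable {X : Type u} [TopologicalSpace X]

/-- ω-resolvability of `s` as a subspace, with closures taken in `X`. -/
def IsOmegaResolvable (s : Set X) : Prop :=
  ∃ D : ℕ → Set X, (∀ n, D n ⊆ s ∧ s ⊆ closure (D n)) ∧ Pairwise (Disjoint on D)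

theorem IsOmegaResolvable.omegaResolvable {s : Set X} (hs : IsOmegaResolvable s) :
    OmegaResolvable s := by
  obtain ⟨D, hD, hdisj⟩ := hs
  refine ⟨fun n => (↑) ⁻¹' D n, fun n => ?_, fun m n hmn => (hdisj hmn).preimage _⟩
  rw [Subtype.dense_iff, Subtype.image_preimage_coe, inter_eq_right.mpr (hD n).1]
  exact (hD n).2

theorem IsOmegaResolvable.of_subset_closure {s t : Set X} (hs : IsOmegaResolvable s)
    (hst : s ⊆ t) (hts : t ⊆ closure s) : IsOmegaResolvable t := by
  obtain ⟨D, hD, hdisj⟩ := hs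
  exact ⟨D, fun n => ⟨(hD n).1.trans hst,
    hts.trans (closure_minimal (hD n).2 isClosed_closure)⟩, hdisj⟩

theorem IsOmegaResolvable.sUnion {F : Set (Set X)} (hFd : F.PairwiseDisjoint id)
    (hF : ∀ s ∈ F, IsOmegaResolvable s) : IsOmegaResolvable (⋃₀ F) := by
  choose! D hD hdisj using hF
  refine ⟨fun k => ⋃ s ∈ F, D s k, fun k => ⟨?_, ?_⟩, fun k l hkl => ?_⟩
  · exact iUnion₂_subset fun s hs => ((hD s hs) k).1.trans (subset_sUnion_of_mem hs)
  · refine sUnion_subset fun s hs => ((hD s hs) k).2.trans (closure_mono ?_)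
    exact subset_biUnion_of_mem (u := fun s => D s k) hs
  · simp only [onFun, disjoint_iUnion_left, disjoint_iUnion_right]
    intro t ht s hs
    obtain rfl | hst := eq_or_ne s t
    · exact hdisj s hs hkl
    · exact (hFd hs ht hst).mono ((hD s hs) k).1 (((hD t ht) l).1 : D t l ⊆ id t)

/-- Splitting the indices by `Nat.pair` into infinitely many infinite classes, each class
is cofinal in the chain, so its union is dense in the union of the chain. -/
theorem isOmegaResolvable_iUnion_of_closure_chain {A : ℕ → Set X}
    (hA : ∀ n, A n ⊆ closure (A (n + 1))) (hdisj : Pairwise (Disjoint on A)) :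
    IsOmegaResolvable (⋃ n, A n) := by
  have hmono : Monotone fun n => closure (A n) :=
    monotone_nat_of_le_succ fun n => closure_minimal (hA n) isClosed_closure
  refine ⟨fun k => ⋃ m, A (Nat.pair k m), fun k => ⟨?_, ?_⟩, fun k l hkl => ?_⟩
  · exact iUnion_subset fun m => subset_iUnion A _
  · refine iUnion_subset fun n => ?_
    calc A n ⊆ closure (A n) := subset_closure
      _ ⊆ closure (A (Nat.pair k n)) := hmono (Nat.right_le_pair k n)
      _ ⊆ closure (⋃ m, A (Nat.pair k m)) := closure_mono (subset_iUnion (A ∘ Nat.pair k) n)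
  · simp only [onFun, disjoint_iUnion_left, disjoint_iUnion_right]
    exact fun m m' => hdisj fun h => hkl (Nat.pair_eq_pair.mp h).1

theorem exists_closure_chain {V : Set X} (hV : V.Nonempty)
    (hstep : ∀ S, S.Countable → S ⊆ V → ∃ B, B.Countable ∧ B ⊆ V \ S ∧ S ⊆ closure B) :
    ∃ A : ℕ → Set X, (∀ n, A n ⊆ V) ∧ (A 0).Nonempty ∧ (∀ n, A n ⊆ closure (A (n + 1))) ∧
      Pairwise (Disjoint on A) := by
  choose! next hcount hfresh hcl using hstep
  obtain ⟨x₀, hx₀⟩ := hV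
  -- `S n` is everything chosen so far, and the `n`-th layer is `next (S n)`.
  set S : ℕ → Set X := fun n => (fun S => S ∪ next S)^[n] {x₀}
  have hS_succ (n : ℕ) : S (n + 1) = S n ∪ next (S n) := iterate_succ_apply' _ n _
  have hS (n : ℕ) : (S n).Countable ∧ S n ⊆ V := by
    induction n with
    | zero => exact ⟨countable_singleton x₀, singleton_subset_iff.mpr hx₀⟩
    | succ n ih =>
      rw [hS_succ]
      exact ⟨ih.1.union (hcount _ ih.1 ih.2),
        union_subset ih.2 fun x hx => (hfresh _ ih.1 ih.2 hx).1⟩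
  have hS_mono : Monotone S := monotone_nat_of_le_succ fun n => by
    rw [hS_succ]; exact subset_union_left
  have hlayer (n : ℕ) : next (S n) ⊆ S (n + 1) := by
    rw [hS_succ]; exact subset_union_right
  refine ⟨fun n => next (S n), fun n x hx => (hfresh _ (hS n).1 (hS n).2 hx).1, ?_,
    fun n => (hlayer n).trans (hcl _ (hS _).1 (hS _).2), ?_⟩
  · have hx₀cl : x₀ ∈ closure (next (S 0)) := hcl _ (hS 0).1 (hS 0).2 rfl
    exact (mem_closure_iff_nhds.mp hx₀cl) univ Filter.univ_mem |>.imp fun _ h => h.2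
  · refine pairwise_disjoint_on _ |>.mpr fun m n hmn => ?_
    refine disjoint_left.mpr fun x hxm hxn => ?_
    exact (hfresh _ (hS n).1 (hS n).2 hxn).2 (hS_mono hmn ((hlayer m) hxm))

theorem exists_pairwiseDisjoint_subset_closure_sUnion {P : Set X → Prop} {U : Set X}
    (hU : IsOpen U) (hP : ∀ V, IsOpen V → V ⊆ U → V.Nonempty → ∃ s ⊆ V, s.Nonempty ∧ P s) :
    ∃ F : Set (Set X), (∀ s ∈ F, s ⊆ U ∧ P s) ∧ F.PairwiseDisjoint id ∧
      U ⊆ closure (⋃₀ F) := by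
  obtain ⟨F, hF⟩ := zorn_subset {F : Set (Set X) | (∀ s ∈ F, s ⊆ U ∧ P s) ∧ F.PairwiseDisjoint id}
    fun c hc hchain => ⟨⋃₀ c, ⟨fun s ⟨G, hG, hsG⟩ => (hc hG).1 s hsG,
      (hchain.pairwiseDisjoint_sUnion id).mpr fun G hG => (hc hG).2⟩,
      fun _ => subset_sUnion_of_mem⟩
  refine ⟨F, hF.prop.1, hF.prop.2, fun x hxU => by_contra fun hx => ?_⟩
  obtain ⟨s, hsV, hs, hPs⟩ := hP (U \ closure (⋃₀ F)) (hU.sdiff isClosed_closure)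
    sdiff_subset ⟨x, hxU, hx⟩
  have hs_disj : ∀ t ∈ F, Disjoint s t := fun t ht =>
    disjoint_left.mpr fun y hys hyt => (hsV hys).2 (subset_closure ⟨t, ht, hyt⟩)
  have hsF : s ∈ F := hF.mem_of_prop_insert
    ⟨forall_insert_of_forall hF.prop.1 ⟨hsV.trans sdiff_subset, hPs⟩,
      hF.prop.2.insert fun t ht _ => hs_disj t ht⟩
  obtain ⟨y, hy⟩ := hs
  exact (hsV hy).2 (subset_closure ⟨s, hsF, hy⟩)

theorem subset_closure_diff_of_countable
    (hΔ : ∀ U : Set X, IsOpen U → U.Nonempty → ¬ U.Countable) {V C : Set X} (hV : IsOpen V)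
    (hC : C.Countable) : V ⊆ closure (V \ C) := by
  have hCint : interior C = ∅ :=
    not_nonempty_iff_eq_empty.mp fun h => hΔ _ isOpen_interior h (hC.mono interior_subset)
  exact (interior_eq_empty_iff_dense_compl.mp hCint).open_subset_closure_inter hV

theorem exists_countable_subset_diff_closure
    (hΔ : ∀ U : Set X, IsOpen U → U.Nonempty → ¬ U.Countable) {V S : Set X} (hV : IsOpen V)
    (ht : ∀ x ∈ V, ¬ UncountableTightnessAt x) (hS : S.Countable) (hSV : S ⊆ V) :
    ∃ B, B.Countable ∧ B ⊆ V \ S ∧ S ⊆ closure B := by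
  have hB : ∀ x ∈ S, ∃ B ⊆ V \ S, B.Countable ∧ x ∈ closure B := fun x hx => by
    have := ht x (hSV hx)
    simp only [UncountableTightnessAt, not_exists, not_and, not_forall, not_not,
      exists_prop] at this
    exact this _ (subset_closure_diff_of_countable hΔ hV hS (hSV hx))
  choose! B hBsub hBcount hBcl using hB
  refine ⟨⋃ x ∈ S, B x, hS.biUnion hBcount, iUnion₂_subset hBsub, fun x hx => ?_⟩
  exact closure_mono (subset_biUnion_of_mem hx) (hBcl x hx)

theorem IsOpen.isOmegaResolvable_of_countable_tightness
    (hΔ : ∀ U : Set X, IsOpen U → U.Nonempty → ¬ U.Countable) {U : Set X} (hU : IsOpen U)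
    (ht : ∀ x ∈ U, ¬ UncountableTightnessAt x) : IsOmegaResolvable U := by
  obtain ⟨F, hFU, hFd, hUF⟩ := exists_pairwiseDisjoint_subset_closure_sUnion hU
    fun V hV hVU hVne => by
      obtain ⟨A, hAV, hA0, hAcl, hAd⟩ := exists_closure_chain hVne fun S hS hSV =>
        exists_countable_subset_diff_closure hΔ hV (fun x hx => ht x (hVU hx)) hS hSV
      exact ⟨⋃ n, A n, iUnion_subset hAV, hA0.mono (subset_iUnion A 0),
        isOmegaResolvable_iUnion_of_closure_chain hAcl hAd⟩
  exact (IsOmegaResolvable.sUnion hFd fun s hs => (hFU s hs).2).of_subset_closure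
    (sUnion_subset fun s hs => (hFU s hs).1) hUF

end

theorem dense_uncountable_tightness_general {X : Type u} [TopologicalSpace X]
    (hΔ : ∀ U : Set X, IsOpen U → U.Nonempty → ¬ U.Countable)
    (hno : ∀ U : Set X, IsOpen U → U.Nonempty → ¬ OmegaResolvable U) :
    Dense {x : X | UncountableTightnessAt x} := by
  refine dense_iff_inter_open.mpr fun U hU hUne => by_contra fun hUT => ?_
  have ht : ∀ x ∈ U, ¬ UncountableTightnessAt x := fun x hxU hx => hUT ⟨x, hxU, hx⟩
  exact hno U hU hUne (hU.isOmegaResolvable_of_countable_tightness hΔ ht).omegaResolvable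

theorem dense_uncountable_tightness {X : Type u} [TopologicalSpace X] [T3Space X]
    (hΔ : ∀ U : Set X, IsOpen U → U.Nonempty → ¬ U.Countable)
    (hgen : ∀ A : Set X,
      (∀ Y : Set X, CountableExtent Y → IsClosed ((↑) ⁻¹' A : Set Y)) → IsClosed A)
    (hnr : ¬ OmegaResolvable X)
    (hno : ∀ U : Set X, IsOpen U → U.Nonempty → ¬ OmegaResolvable U) :
    Dense {x : X | UncountableTightnessAt x} :=
  dense_uncountable_tightness_general hΔ hno
end
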